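/- arXiv:math/0311205 — 3 statements merged into one kernel-verified Lean document; each statement's English description precedes it below -/
import Mathlib

section
/- For every integer j ≥ 0, one has 50·F_{j+1}^{(3)} = 5(j+1)(j+2)·F_{j+3} + 6(j+1)·L_{j+2} + 12·F_{j+1}, where F_n are the Fibonacci numbers and L_n the Lucas numbers. -/
/-!
Since `(1 - z - z²)^{-r-1} = (1 - z - z²)^{-1} (1 - z - z²)^{-r}`, the sequence `F^{(r+1)}` is the
convolution of `(F_{m+1})` with `F^{(r)}`, and hence obeys the Fibonacci recurrence with forcing
term `F^{(r)}_{m+3}`.  A sequence obeying such a recurrence is determined by its first two terms,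
so it suffices to check that the closed forms `5 F^{(2)}_{m+1} = (m+2) L_{m+2} - F_{m+2}` and the
claimed one obey the same recurrences.
Writing `L_{n+1} = F_n + F_{n+2}` and expanding every `F_{m+k}` in terms of `F_m` and `F_{m+1}`,
each of these checks becomes a polynomial identity.
-/

/-- `convFib r m` is the convolved Fibonacci number `F_{m+1}^{(r)}`, the coefficient of
`z^m` in `(1 - z - z^2)^{-r}`, given by `∑_{j_1+⋯+j_r=m} F_{j_1+1}⋯F_{j_r+1}`. -/
def convFib (r m : ℕ) : ℕ :=
  ∑ t ∈ Finset.Nat.antidiagonalTuple r m, ∏ i, Nat.fib (t i + 1)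

/-- The Lucas numbers: `L_0 = 2`, `L_1 = 1`, `L_{n+2} = L_{n+1} + L_n`. -/
def lucas : ℕ → ℕ
  | 0 => 2
  | 1 => 1
  | n + 2 => lucas (n + 1) + lucas n

open Finset

theorem eq_of_add_two_eq_add_add {M : Type*} [Add M] {u v w : ℕ → M}
    (hu : ∀ m, u (m + 2) = u (m + 1) + u m + w m) (hv : ∀ m, v (m + 2) = v (m + 1) + v m + w m)
    (h₀ : u 0 = v 0) (h₁ : u 1 = v 1) : u = v := by
  funext n
  induction n using Nat.twoStepInduction with
  | zero => exact h₀
  | one => exact h₁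
  | more n ih₁ ih₂ => rw [hu, hv, ih₁, ih₂]

theorem sum_antidiagonal_fib_mul_add_two {R : Type*} [NonAssocSemiring R] (f : ℕ → R) (m : ℕ) :
    ∑ p ∈ antidiagonal (m + 2), (Nat.fib (p.1 + 1) : R) * f p.2 =
      ∑ p ∈ antidiagonal (m + 1), (Nat.fib (p.1 + 1) : R) * f p.2 +
        ∑ p ∈ antidiagonal m, (Nat.fib (p.1 + 1) : R) * f p.2 + f (m + 2) := by
  simp only [Nat.sum_antidiagonal_succ, zero_add, Nat.fib_zero, Nat.fib_one, Nat.fib_add_two,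
    Nat.cast_zero, Nat.cast_one, Nat.cast_add, zero_mul, one_mul, add_mul, sum_add_distrib]
  abel

theorem convFib_succ (r m : ℕ) :
    convFib (r + 1) m = ∑ p ∈ antidiagonal m, Nat.fib (p.1 + 1) * convFib r p.2 := by
  simp only [convFib, mul_sum]
  rw [sum_sigma']
  refine sum_bij' (fun t _ ↦ ⟨(t 0, ∑ i : Fin r, t i.succ), Fin.tail t⟩)
    (fun p _ ↦ Fin.cons p.1.1 p.2) ?_ ?_ ?_ ?_ ?_
  · intro t ht
    rw [Nat.mem_antidiagonalTuple, Fin.sum_univ_succ] at ht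
    exact mem_sigma.2 ⟨HasAntidiagonal.mem_antidiagonal.2 ht, Nat.mem_antidiagonalTuple.2 rfl⟩
  · rintro ⟨⟨a, b⟩, t⟩ hp
    simp only [mem_sigma, HasAntidiagonal.mem_antidiagonal, Nat.mem_antidiagonalTuple] at hp
    rw [Nat.mem_antidiagonalTuple, Fin.sum_cons, hp.2, hp.1]
  · intro t _
    exact Fin.cons_self_tail t
  · rintro ⟨⟨a, b⟩, t⟩ hp
    simp only [mem_sigma, HasAntidiagonal.mem_antidiagonal, Nat.mem_antidiagonalTuple] at hp
    simp [hp.2]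
  · intro t _
    exact Fin.prod_univ_succ _

theorem convFib_succ_add_two (r m : ℕ) :
    convFib (r + 1) (m + 2) = convFib (r + 1) (m + 1) + convFib (r + 1) m + convFib r (m + 2) := by
  simpa [convFib_succ] using sum_antidiagonal_fib_mul_add_two (R := ℕ) (convFib r) m

theorem convFib_one (m : ℕ) : convFib 1 m = Nat.fib (m + 1) := by
  simp [convFib, Nat.antidiagonalTuple_one]

theorem lucas_add_one (n : ℕ) : lucas (n + 1) = Nat.fib n + Nat.fib (n + 2) := by
  induction n using Nat.twoStepInduction with
  | zero => rfl
  | one => rfl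
  | more n ih₁ ih₂ =>
    rw [lucas, ih₁, ih₂, Nat.fib_add_two (n := n + 2), Nat.fib_add_two (n := n + 1),
      Nat.fib_add_two (n := n)]
    ring

theorem five_mul_convFib_two (m : ℕ) :
    (5 * convFib 2 m : ℤ) = (m + 2) * lucas (m + 2) - Nat.fib (m + 2) := by
  suffices key : (fun m ↦ (5 * convFib 2 m : ℤ)) =
      fun m : ℕ ↦ (m + 2) * (lucas (m + 2) : ℤ) - Nat.fib (m + 2) from congrFun key m
  refine eq_of_add_two_eq_add_add (w := fun m ↦ 5 * (Nat.fib (m + 3) : ℤ))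
    (fun m ↦ ?_) (fun m ↦ ?_) (by decide) (by decide)
  · push_cast [convFib_succ_add_two 1 m, convFib_one]
    ring
  · simp only [lucas_add_one, Nat.fib_add_two]
    push_cast
    ring

/-- For every integer `j ≥ 0`,
`50 F_{j+1}^{(3)} = 5(j+1)(j+2) F_{j+3} + 6(j+1) L_{j+2} + 12 F_{j+1}`. -/
theorem fifty_mul_convFib_three (j : ℕ) :
    50 * convFib 3 j =
      5 * (j + 1) * (j + 2) * Nat.fib (j + 3) + 6 * (j + 1) * lucas (j + 2) +
        12 * Nat.fib (j + 1) := by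
  have key : (fun m ↦ (50 * convFib 3 m : ℤ)) = fun m : ℕ ↦
      5 * ((m : ℤ) + 1) * (m + 2) * Nat.fib (m + 3) + 6 * (m + 1) * lucas (m + 2) +
        12 * Nat.fib (m + 1) := by
    refine eq_of_add_two_eq_add_add
      (w := fun m ↦ 10 * ((m + 4) * lucas (m + 4) - Nat.fib (m + 4) : ℤ))
      (fun m ↦ ?_) (fun m ↦ ?_) (by decide) (by decide)
    · have h := five_mul_convFib_two (m + 2)
      push_cast [convFib_succ_add_two 2 m] at h ⊢
      linear_combination 10 * h
    · simp only [lucas_add_one, Nat.fib_add_two]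
      push_cast
      ring
  exact_mod_cast congrFun key j
end

section
/- For all integers j ≥ 1 and r ≥ 1, the convoluted convolved Fibonacci number G_j^{(r)} and the sign twisted convoluted convolved Fibonacci number H_j^{(r)} are non-negative integers; moreover, if j ≥ 2 then G_j^{(r)} ≥ 1 and H_j^{(r)} ≥ 1. -/
/-- The convoluted convolved Fibonacci numbers:
`Gfib r m = G_{m+1}^{(r)} = (1/r) ∑_{d ∣ gcd(r,m)} μ(d) F_{m/d+1}^{(r/d)}`. -/
noncomputable def Gfib (r m : ℕ) : ℚ :=
  (1 / (r : ℚ)) * ∑ d ∈ (Nat.gcd r m).divisors,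
    ((ArithmeticFunction.moebius d : ℤ) : ℚ) * convFib (r / d) (m / d)

/-- The sign twisted convoluted convolved Fibonacci numbers:
`Hfib r m = H_{m+1}^{(r)} = ((-1)^r/r) ∑_{d ∣ gcd(r,m)} μ(d) (-1)^{r/d} F_{m/d+1}^{(r/d)}`. -/
noncomputable def Hfib (r m : ℕ) : ℚ :=
  ((-1 : ℚ) ^ r / (r : ℚ)) * ∑ d ∈ (Nat.gcd r m).divisors,
    ((ArithmeticFunction.moebius d : ℤ) : ℚ) * (-1 : ℚ) ^ (r / d) * convFib (r / d) (m / d)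

open PowerSeries Finset ArithmeticFunction
open scoped ArithmeticFunction.Moebius

namespace PowerSeries

theorem coeff_pow_eq_sum_antidiagonalTuple {R : Type*} [CommSemiring R] (φ : R⟦X⟧) (k n : ℕ) :
    coeff n (φ ^ k) = ∑ t ∈ Nat.antidiagonalTuple k n, ∏ i, coeff (t i) φ := by
  classical
  rw [← Fin.prod_const, coeff_prod, finsuppAntidiag, sum_map,
    ← piAntidiag_univ_fin_eq_antidiagonalTuple]
  exact sum_attach (piAntidiag univ n) fun t => ∏ i, coeff (t i) φ

theorem C_dvd_iff_dvd_coeff {R : Type*} [CommSemiring R] (r : R) (φ : R⟦X⟧) :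
    C r ∣ φ ↔ ∀ n, r ∣ coeff n φ := by
  refine ⟨fun ⟨ψ, hψ⟩ n => ⟨coeff n ψ, by rw [hψ, coeff_C_mul]⟩, fun h => ?_⟩
  choose ψ hψ using h
  exact ⟨mk ψ, by ext n; rw [coeff_C_mul, coeff_mk, hψ]⟩

theorem natCast_dvd_iff_map_eq_zero (n : ℕ) (φ : ℤ⟦X⟧) :
    (n : ℤ⟦X⟧) ∣ φ ↔ map (Int.castRingHom (ZMod n)) φ = 0 := by
  rw [← map_natCast C, C_dvd_iff_dvd_coeff, PowerSeries.ext_iff]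
  simp [coeff_map, ZMod.intCast_zmod_eq_zero_iff_dvd]

theorem pow_eq_expand_of_mul_eq_one {R : Type*} [CommRing R] {p : ℕ} (hp : p ≠ 0)
    {u φ : R⟦X⟧} (huφ : u * φ = 1) (hu : u ^ p = expand p hp u) :
    φ ^ p = expand p hp φ :=
  calc φ ^ p = φ ^ p * expand p hp (u * φ) := by rw [huφ, map_one, mul_one]
    _ = (u * φ) ^ p * expand p hp φ := by rw [map_mul, ← hu]; ring
    _ = expand p hp φ := by rw [huφ, one_pow, one_mul]

end PowerSeries

theorem ArithmeticFunction.moebius_prime_mul {p n : ℕ} (hp : p.Prime) (hpn : ¬p ∣ n) :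
    μ (p * n) = -μ n := by
  rw [isMultiplicative_moebius.map_mul_of_coprime ((hp.coprime_iff_not_dvd).mpr hpn),
    moebius_apply_prime hp, neg_one_mul]

-- The divisors `d` with `p ∣ d` and `μ d ≠ 0` are the `p * e` with `p ∤ e`, and `μ (p * e) = -μ e`.
theorem sum_divisors_moebius_mul_eq_sum_not_dvd {p : ℕ} (hp : p.Prime) (g : ℕ) (T : ℕ → ℤ) :
    ∑ d ∈ g.divisors, μ d * T d =
      ∑ d ∈ g.divisors with ¬p ∣ d, μ d * (T d - if p * d ∣ g then T (p * d) else 0) := by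
  rw [← sum_filter_not_add_sum_filter g.divisors (p ∣ ·)]
  simp_rw [mul_sub, sum_sub_distrib, sub_eq_add_neg, ← sum_neg_distrib]
  congr 1
  symm
  refine sum_bij_ne_zero (fun e _ _ => p * e) ?_ ?_ ?_ ?_
  · intro e he hne
    simp only [mem_filter, Nat.mem_divisors] at he ⊢
    refine ⟨⟨?_, he.1.2⟩, dvd_mul_right p e⟩
    by_contra h
    simp [h] at hne
  · intro e _ _ e' _ _ h
    exact Nat.eq_of_mul_eq_mul_left hp.pos h
  · intro d hd hne
    simp only [mem_filter, Nat.mem_divisors] at hd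
    obtain ⟨⟨hdg, hg⟩, e, rfl⟩ := hd
    have hpe : ¬p ∣ e := fun hpe =>
      moebius_ne_zero_iff_squarefree.mp (left_ne_zero_of_mul hne) p (mul_dvd_mul_left p hpe)
        |> hp.not_isUnit
    refine ⟨e, ?_, ?_, rfl⟩
    · simp only [mem_filter, Nat.mem_divisors]
      exact ⟨⟨(dvd_mul_left e p).trans hdg, hg⟩, hpe⟩
    · rwa [if_pos hdg, ← neg_mul, ← moebius_prime_mul hp hpe]
  · intro e he hne
    simp only [mem_filter] at he
    split_ifs at hne ⊢ with h
    · rw [moebius_prime_mul hp he.2, neg_mul]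
    · simp at hne

theorem natCast_dvd_sum_moebius_mul {c : ℕ → ℕ → ℤ}
    (hc : ∀ p k s n : ℕ, p.Prime →
      (p : ℤ) ^ (k + 1) ∣ c (p ^ (k + 1) * s) n - if p ∣ n then c (p ^ k * s) (n / p) else 0)
    {r : ℕ} (hr : r ≠ 0) (m : ℕ) :
    (r : ℤ) ∣ ∑ d ∈ (r.gcd m).divisors, μ d * c (r / d) (m / d) := by
  rw [Int.natCast_dvd, Nat.dvd_iff_prime_pow_dvd_dvd]
  rintro p (_ | k) hp ⟨s, rfl⟩
  · exact one_dvd _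
  rw [← Int.natCast_dvd, Nat.cast_pow, sum_divisors_moebius_mul_eq_sum_not_dvd hp]
  refine dvd_sum fun d hd => Dvd.dvd.mul_left ?_ _
  simp only [mem_filter, Nat.mem_divisors] at hd
  obtain ⟨⟨hdg, -⟩, hpd⟩ := hd
  have hdm : d ∣ m := hdg.trans (Nat.gcd_dvd_right _ _)
  have hds : d ∣ s := (Nat.Coprime.pow_left _ ((hp.coprime_iff_not_dvd).mpr hpd)).symm
    |>.dvd_of_dvd_mul_left (hdg.trans (Nat.gcd_dvd_left _ _))
  have hrd : p ^ (k + 1) * s / d = p ^ (k + 1) * (s / d) := Nat.mul_div_assoc _ hds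
  have hrpd : p ^ (k + 1) * s / (p * d) = p ^ k * (s / d) := by
    rw [pow_succ', mul_assoc, Nat.mul_div_mul_left _ _ hp.pos, Nat.mul_div_assoc _ hds]
  have hmpd : m / (p * d) = m / d / p := by rw [Nat.div_div_eq_div_mul, mul_comm]
  have hpdg : p * d ∣ (p ^ (k + 1) * s).gcd m ↔ p ∣ m / d := by
    rw [Nat.dvd_gcd_iff, Nat.dvd_div_iff_mul_dvd hdm, mul_comm d p, pow_succ', mul_assoc,
      and_iff_right (mul_dvd_mul_left p (hds.trans (dvd_mul_left s _)))]
  rw [hrd, hrpd, hmpd]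
  simpa only [hpdg] using hc p k (s / d) (m / d) hp

def FrobeniusCongruence (φ : ℤ⟦X⟧) : Prop :=
  ∀ (p : ℕ) (hp : p.Prime), (p : ℤ⟦X⟧) ∣ φ ^ p - expand p hp.ne_zero φ

namespace FrobeniusCongruence

variable {φ : ℤ⟦X⟧}

theorem neg (hφ : FrobeniusCongruence φ) : FrobeniusCongruence (-φ) := by
  intro p hp
  rcases hp.eq_two_or_odd' with rfl | hodd
  · have h : (-φ) ^ 2 - expand 2 hp.ne_zero (-φ)
        = (φ ^ 2 - expand 2 hp.ne_zero φ) + 2 * expand 2 hp.ne_zero φ := by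
      rw [map_neg]; ring
    rw [h]
    exact dvd_add (hφ 2 hp) (by exact_mod_cast dvd_mul_right _ _)
  · rw [map_neg, hodd.neg_pow, sub_neg_eq_add, neg_add_eq_sub, ← neg_sub]
    exact (hφ p hp).neg_right

theorem prime_pow_dvd (hφ : FrobeniusCongruence φ) {p : ℕ} (hp : p.Prime) (k s : ℕ) :
    (p : ℤ⟦X⟧) ^ (k + 1) ∣ φ ^ (p ^ (k + 1) * s) - expand p hp.ne_zero (φ ^ (p ^ k * s)) := by
  have h := (dvd_sub_pow_of_dvd_sub (hφ p hp) k).trans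
    (sub_dvd_pow_sub_pow ((φ ^ p) ^ p ^ k) (expand p hp.ne_zero φ ^ p ^ k) s)
  rwa [← pow_mul, ← pow_mul, ← pow_mul, ← map_pow, ← mul_assoc, ← pow_succ'] at h

theorem coeff_pow_sub_dvd (hφ : FrobeniusCongruence φ) {p : ℕ} (hp : p.Prime) (k s n : ℕ) :
    (p : ℤ) ^ (k + 1) ∣ coeff n (φ ^ (p ^ (k + 1) * s)) -
      if p ∣ n then coeff (n / p) (φ ^ (p ^ k * s)) else 0 := by
  have h := hφ.prime_pow_dvd hp k s
  rw [← map_natCast C, ← map_pow, C_dvd_iff_dvd_coeff] at h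
  simpa only [map_sub, coeff_expand] using h n

theorem dvd_sum_moebius_coeff_pow (hφ : FrobeniusCongruence φ) {r : ℕ} (hr : r ≠ 0) (m : ℕ) :
    (r : ℤ) ∣ ∑ d ∈ (r.gcd m).divisors, μ d * coeff (m / d) (φ ^ (r / d)) :=
  natCast_dvd_sum_moebius_mul (c := fun k n => coeff n (φ ^ k))
    (fun _ k s n hp => hφ.coeff_pow_sub_dvd hp k s n) hr m

end FrobeniusCongruence

noncomputable def fibSeries (R : Type*) [CommSemiring R] : R⟦X⟧ :=
  mk fun n => (Nat.fib (n + 1) : R)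

theorem fibSeries_mul_eq_one (R : Type*) [CommRing R] : (1 - X - X ^ 2) * fibSeries R = 1 := by
  ext (_ | _ | n) <;> simp [sub_mul, coeff_X_pow_mul', X_mul, coeff_succ_mul_X, fibSeries,
    coeff_one, Nat.fib_add_two]

theorem map_fibSeries {R S : Type*} [CommSemiring R] [CommSemiring S] (f : R →+* S) :
    map f (fibSeries R) = fibSeries S := by
  ext n
  simp [fibSeries]

theorem frobeniusCongruence_fibSeries : FrobeniusCongruence (fibSeries ℤ) := by
  intro p hp
  have := Fact.mk hp
  have : CharP (ZMod p)⟦X⟧ p := charP_of_injective_ringHom C_injective p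
  rw [natCast_dvd_iff_map_eq_zero, map_sub, map_pow, map_expand, map_fibSeries, sub_eq_zero]
  refine pow_eq_expand_of_mul_eq_one hp.ne_zero (fibSeries_mul_eq_one _) ?_
  rw [sub_pow_char, sub_pow_char, one_pow, map_sub, map_sub, map_one, map_pow, expand_X,
    ← pow_mul, ← pow_mul, mul_comm]

theorem natCast_convFib_eq_coeff {R : Type*} [CommSemiring R] (k n : ℕ) :
    (convFib k n : R) = coeff n (fibSeries R ^ k) := by
  simp [convFib, coeff_pow_eq_sum_antidiagonalTuple, fibSeries]

theorem coeff_neg_fibSeries_pow (k n : ℕ) :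
    coeff n ((-fibSeries ℤ) ^ k) = (-1) ^ k * convFib k n := by
  rw [neg_pow, show (-1 : ℤ⟦X⟧) ^ k = C ((-1) ^ k) by simp, coeff_C_mul, natCast_convFib_eq_coeff]

theorem convFib_eq_coeff (k n : ℕ) : convFib k n = coeff n (fibSeries ℕ ^ k) :=
  natCast_convFib_eq_coeff k n

theorem convFib_zero_right (k : ℕ) : convFib k 0 = 1 := by
  simp [convFib, Nat.antidiagonalTuple_zero_right]

theorem convFib_one_left (n : ℕ) : convFib 1 n = Nat.fib (n + 1) := by
  simp [convFib, Nat.antidiagonalTuple_one]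

theorem convFib_pos {k : ℕ} (hk : k ≠ 0) (n : ℕ) : 0 < convFib k n := by
  obtain ⟨k, rfl⟩ := Nat.exists_eq_succ_of_ne_zero hk
  refine sum_pos (fun t _ => prod_pos fun i _ => Nat.fib_pos.mpr (Nat.succ_pos _))
    ⟨Pi.single 0 n, ?_⟩
  simp [Nat.mem_antidiagonalTuple]

theorem convFib_mul_le (a b a' b' : ℕ) :
    convFib a b * convFib a' b' ≤ convFib (a + a') (b + b') := by
  simp only [convFib_eq_coeff, pow_add, coeff_mul]
  exact single_le_sum (f := fun x => coeff x.1 (fibSeries ℕ ^ a) * coeff x.2 (fibSeries ℕ ^ a'))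
    (fun _ _ => Nat.zero_le _) (a := (b, b')) (mem_antidiagonal.mpr rfl)

theorem convFib_mul_lt {a b a' : ℕ} (hb : b ≠ 0) (ha' : a' ≠ 0) (b' : ℕ) :
    convFib a b * convFib a' b' < convFib (a + a') (b + b') := by
  have hsub : {(b, b'), (0, b + b')} ⊆ antidiagonal (b + b') := by
    simp [insert_subset_iff]
  calc convFib a b * convFib a' b'
      < convFib a b * convFib a' b' + convFib a 0 * convFib a' (b + b') := by
        simpa [convFib_zero_right] using convFib_pos ha' _
    _ ≤ convFib (a + a') (b + b') := by
      simp only [convFib_eq_coeff, pow_add, coeff_mul]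
      exact (sum_pair (by simpa using hb)).symm.trans_le (sum_le_sum_of_subset (f := fun x =>
        coeff x.1 (fibSeries ℕ ^ a) * coeff x.2 (fibSeries ℕ ^ a')) hsub)

theorem convFib_le_convFib {a b a' b' : ℕ} (ha : a < a') (hb : b ≤ b') :
    convFib a b ≤ convFib a' b' :=
  calc convFib a b ≤ convFib a b * convFib (a' - a) (b' - b) :=
        Nat.le_mul_of_pos_right _ (convFib_pos (by omega) _)
    _ ≤ convFib (a + (a' - a)) (b + (b' - b)) := convFib_mul_le ..
    _ = convFib a' b' := by congr 1 <;> omega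

theorem add_le_convFib_add_one {k n : ℕ} (hk : k ≠ 0) (hn : n ≠ 0) : k + n ≤ convFib k n + 1 := by
  induction k, Nat.one_le_iff_ne_zero.mpr hk using Nat.le_induction with
  | base => simpa [convFib_one_left, add_comm] using Nat.le_fib_add_one (n + 1)
  | succ k hk ih =>
    have := convFib_mul_lt (a := k) hn one_ne_zero 0
    rw [convFib_zero_right, mul_one, add_zero] at this
    omega

def convFibDivisorSum (w : ℕ → ℤ) (r m : ℕ) : ℤ :=
  ∑ d ∈ (r.gcd m).divisors, w d * convFib (r / d) (m / d)

theorem sub_mul_le_sum_divisors {g : ℕ} (hg : g ≠ 0) {f : ℕ → ℤ} {B : ℤ}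
    (hB : ∀ d ∈ g.divisors, d ≠ 1 → -B ≤ f d) :
    f 1 - (#g.divisors - 1 : ℤ) * B ≤ ∑ d ∈ g.divisors, f d := by
  have h1 : 1 ∈ g.divisors := Nat.one_mem_divisors.mpr hg
  have h := card_nsmul_le_sum _ f (-B) fun d hd => hB d (mem_of_mem_erase hd) (ne_of_mem_erase hd)
  rw [card_erase_of_mem h1, nsmul_eq_mul, Nat.cast_sub (card_pos.mpr ⟨1, h1⟩)] at h
  rw [← add_sum_erase _ _ h1]
  push_cast at h
  linarith

theorem convFib_div_le_convFib_div {r q d : ℕ} (hr : r ≠ 0) (hqr : q ∣ r) (hdr : d ∣ r)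
    (hq : q ≠ 0) (hqd : q ≤ d) (m : ℕ) : convFib (r / d) (m / d) ≤ convFib (r / q) (m / q) := by
  rcases hqd.eq_or_lt with rfl | hlt
  · exact le_rfl
  exact convFib_le_convFib ((Nat.div_lt_div_left hr hdr hqr).mpr hlt)
    (Nat.div_le_div_left hlt.le (Nat.pos_of_ne_zero hq))

theorem card_divisors_gcd_mul_convFib_lt {r m q : ℕ} (hr : r ≠ 0) (hm : m ≠ 0) (hq : q.Prime)
    (hqg : q ∣ r.gcd m) :
    #(r.gcd m).divisors * convFib (r / q) (m / q) < convFib r m + convFib (r / q) (m / q) := by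
  have hgr : r.gcd m ≤ r := Nat.le_of_dvd (Nat.pos_of_ne_zero hr) (Nat.gcd_dvd_left r m)
  have hgm : r.gcd m ≤ m := Nat.le_of_dvd (Nat.pos_of_ne_zero hm) (Nat.gcd_dvd_right r m)
  have hqm : q ≤ m := Nat.le_of_dvd (Nat.pos_of_ne_zero hm) (hqg.trans (Nat.gcd_dvd_right r m))
  have hmq : m / q ≠ 0 := (Nat.div_pos hqm hq.pos).ne'
  have hrq : r / q < r := Nat.div_lt_self (Nat.pos_of_ne_zero hr) hq.one_lt
  have hmq' : m / q < m := Nat.div_lt_self (Nat.pos_of_ne_zero hm) hq.one_lt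
  have hr2 : r / q ≤ r / 2 := Nat.div_le_div_left hq.two_le two_pos
  have hm2 : m / q ≤ m / 2 := Nat.div_le_div_left hq.two_le two_pos
  have hlt := convFib_mul_lt (a := r / q) hmq (a' := r - r / q) (by omega) (m - m / q)
  rw [Nat.add_sub_cancel' hrq.le, Nat.add_sub_cancel' hmq'.le] at hlt
  have hcard : #(r.gcd m).divisors ≤ convFib (r - r / q) (m - m / q) + 1 :=
    (Nat.card_divisors_le_self _).trans <| (by omega : r.gcd m ≤ r - r / q + (m - m / q)).trans
      (add_le_convFib_add_one (by omega) (by omega))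
  calc #(r.gcd m).divisors * convFib (r / q) (m / q)
      ≤ (convFib (r - r / q) (m - m / q) + 1) * convFib (r / q) (m / q) := by gcongr
    _ < convFib r m + convFib (r / q) (m / q) := by rw [add_one_mul, mul_comm]; omega

theorem convFibDivisorSum_pos {w : ℕ → ℤ} (hw1 : w 1 = 1) (hw : ∀ d, |w d| ≤ 1) {r m : ℕ}
    (hr : r ≠ 0) (hm : m ≠ 0) : 0 < convFibDivisorSum w r m := by
  set g := r.gcd m with hg
  have hgr : g ∣ r := Nat.gcd_dvd_left r m
  have hg0 : g ≠ 0 := Nat.gcd_ne_zero_left hr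
  rcases eq_or_ne g 1 with hg1 | hg1
  · simpa [convFibDivisorSum, ← hg, hg1, hw1] using convFib_pos hr m
  set q := g.minFac
  have hq : q.Prime := Nat.minFac_prime hg1
  have hqg : q ∣ g := Nat.minFac_dvd g
  set X := convFib (r / q) (m / q)
  have hterm : ∀ d ∈ g.divisors, d ≠ 1 → -(X : ℤ) ≤ w d * convFib (r / d) (m / d) := by
    intro d hd hd1
    have hdg := Nat.dvd_of_mem_divisors hd
    have hqd : q ≤ d := Nat.minFac_le_of_dvd
      ((Nat.two_le_iff d).mpr ⟨(Nat.pos_of_mem_divisors hd).ne', hd1⟩) hdg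
    have hle := convFib_div_le_convFib_div hr (hqg.trans hgr) (hdg.trans hgr) hq.ne_zero hqd m
    refine neg_le_of_abs_le ?_
    rw [abs_mul, Nat.abs_cast]
    exact (mul_le_of_le_one_left (by positivity) (hw d)).trans (by exact_mod_cast hle)
  have hmain : (#g.divisors * X : ℤ) < convFib r m + X := by
    exact_mod_cast card_divisors_gcd_mul_convFib_lt hr hm hq hqg
  calc 0 < (convFib r m : ℤ) - (#g.divisors - 1 : ℤ) * X := by linarith
    _ ≤ convFibDivisorSum w r m := by
      simpa [convFibDivisorSum, hw1] using sub_mul_le_sum_divisors hg0 hterm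

theorem convFibDivisorSum_nonneg {w : ℕ → ℤ} (hw1 : w 1 = 1) (hw : ∀ d, |w d| ≤ 1) {r : ℕ}
    (hr : r ≠ 0) (m : ℕ) (hdvd : (r : ℤ) ∣ convFibDivisorSum w r m) :
    0 ≤ convFibDivisorSum w r m := by
  rcases eq_or_ne m 0 with rfl | hm
  · have hlow : -(r : ℤ) < convFibDivisorSum w r 0 := by
      have h := sub_mul_le_sum_divisors hr (f := w) (B := 1) fun d _ _ => (abs_le.mp (hw d)).1
      have hτ : (#r.divisors : ℤ) ≤ r := by exact_mod_cast Nat.card_divisors_le_self r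
      simp only [convFibDivisorSum, Nat.gcd_zero_right, Nat.zero_div, convFib_zero_right,
        Nat.cast_one, mul_one]
      linarith
    by_contra! hneg
    linarith [Int.le_of_dvd (neg_pos.mpr hneg) (dvd_neg.mpr hdvd)]
  · exact (convFibDivisorSum_pos hw1 hw hr hm).le

theorem exists_nat_eq_convFibDivisorSum_div {w : ℕ → ℤ} (hw1 : w 1 = 1) (hw : ∀ d, |w d| ≤ 1)
    {r : ℕ} (hr : r ≠ 0) (m : ℕ) (hdvd : (r : ℤ) ∣ convFibDivisorSum w r m) :
    ∃ n : ℕ, (convFibDivisorSum w r m : ℚ) / r = n := by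
  have hS := convFibDivisorSum_nonneg hw1 hw hr m hdvd
  obtain ⟨t, ht⟩ := hdvd
  have ht0 : 0 ≤ t := nonneg_of_mul_nonneg_right (ht ▸ hS) (by positivity)
  refine ⟨t.toNat, ?_⟩
  rw [ht, Int.cast_mul, Int.cast_natCast, mul_div_cancel_left₀ _ (by exact_mod_cast hr),
    ← Int.cast_natCast, Int.toNat_of_nonneg ht0]

theorem one_le_convFibDivisorSum_div {w : ℕ → ℤ} (hw1 : w 1 = 1) (hw : ∀ d, |w d| ≤ 1) {r m : ℕ}
    (hr : r ≠ 0) (hm : m ≠ 0) (hdvd : (r : ℤ) ∣ convFibDivisorSum w r m) :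
    1 ≤ (convFibDivisorSum w r m : ℚ) / r := by
  rw [one_le_div (by positivity)]
  exact_mod_cast Int.le_of_dvd (convFibDivisorSum_pos hw1 hw hr hm) hdvd

theorem Gfib_eq_convFibDivisorSum (r m : ℕ) :
    Gfib r m = (convFibDivisorSum (fun d => μ d) r m : ℚ) / r := by
  simp only [Gfib, convFibDivisorSum]
  push_cast
  ring

theorem Hfib_eq_convFibDivisorSum (r m : ℕ) :
    Hfib r m = (convFibDivisorSum (fun d => μ d * (-1) ^ (r + r / d)) r m : ℚ) / r := by
  simp only [Hfib, convFibDivisorSum, div_mul_eq_mul_div, mul_sum]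
  push_cast
  rw [sum_div]
  refine sum_congr rfl fun d _ => ?_
  ring

theorem natCast_dvd_convFibDivisorSum_moebius {r : ℕ} (hr : r ≠ 0) (m : ℕ) :
    (r : ℤ) ∣ convFibDivisorSum (fun d => μ d) r m := by
  simpa only [convFibDivisorSum, natCast_convFib_eq_coeff] using
    frobeniusCongruence_fibSeries.dvd_sum_moebius_coeff_pow hr m

theorem natCast_dvd_convFibDivisorSum_twisted {r : ℕ} (hr : r ≠ 0) (m : ℕ) :
    (r : ℤ) ∣ convFibDivisorSum (fun d => μ d * (-1) ^ (r + r / d)) r m := by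
  have h := frobeniusCongruence_fibSeries.neg.dvd_sum_moebius_coeff_pow hr m
  have heq : convFibDivisorSum (fun d => μ d * (-1) ^ (r + r / d)) r m =
      (-1) ^ r * ∑ d ∈ (r.gcd m).divisors, μ d * coeff (m / d) ((-fibSeries ℤ) ^ (r / d)) := by
    simp only [convFibDivisorSum, coeff_neg_fibSeries_pow, mul_sum, pow_add]
    exact sum_congr rfl fun d _ => by ring
  rw [heq]
  exact h.mul_left _

theorem Gfib_Hfib_nonneg_int_general (j r : ℕ) (hr : 1 ≤ r) :
    (∃ n : ℕ, Gfib r (j - 1) = n) ∧ (∃ n : ℕ, Hfib r (j - 1) = n) ∧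
      (2 ≤ j → 1 ≤ Gfib r (j - 1) ∧ 1 ≤ Hfib r (j - 1)) := by
  have hr0 : r ≠ 0 := by omega
  have hG := natCast_dvd_convFibDivisorSum_moebius hr0 (j - 1)
  have hH := natCast_dvd_convFibDivisorSum_twisted hr0 (j - 1)
  have hG1 : (μ 1 : ℤ) = 1 := moebius_apply_one
  have hH1 : μ 1 * (-1) ^ (r + r / 1) = 1 := by simp
  have hGw : ∀ d, |(μ d : ℤ)| ≤ 1 := fun _ => abs_moebius_le_one
  have hHw : ∀ d, |μ d * (-1) ^ (r + r / d)| ≤ 1 := fun _ => by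
    simpa [abs_mul] using abs_moebius_le_one
  rw [Gfib_eq_convFibDivisorSum, Hfib_eq_convFibDivisorSum]
  exact ⟨exists_nat_eq_convFibDivisorSum_div hG1 hGw hr0 _ hG,
    exists_nat_eq_convFibDivisorSum_div hH1 hHw hr0 _ hH,
    fun hj => ⟨one_le_convFibDivisorSum_div hG1 hGw hr0 (by omega) hG,
      one_le_convFibDivisorSum_div hH1 hHw hr0 (by omega) hH⟩⟩

/-- Proposition 1, parts 1)-2): for `j, r ≥ 1`, `G_j^{(r)}` and `H_j^{(r)}` are
non-negative integers, and if `j ≥ 2` then `G_j^{(r)} ≥ 1` and `H_j^{(r)} ≥ 1`.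
(Here `G_j^{(r)} = Gfib r (j-1)` and `H_j^{(r)} = Hfib r (j-1)`.) -/
theorem Gfib_Hfib_nonneg_int (j r : ℕ) (hj : 1 ≤ j) (hr : 1 ≤ r) :
    (∃ n : ℕ, Gfib r (j - 1) = n) ∧ (∃ n : ℕ, Hfib r (j - 1) = n) ∧
      (2 ≤ j → 1 ≤ Gfib r (j - 1) ∧ 1 ≤ Hfib r (j - 1)) :=
  Gfib_Hfib_nonneg_int_general j r hr
end

section
/- Let r ≥ 1 and let n_1, …, n_r be non-negative integers with n = n_1 + ⋯ + n_r ≥ 1. Define V_1(n_1, …, n_r) = ((−1)^{n_1} / n) Σ_{d | gcd(n_1, …, n_r)} μ(d) (−1)^{n_1/d} · (n/d)! / ((n_1/d)! ⋯ (n_r/d)!). Then V_1(n_1, …, n_r) = M(n_1, …, n_r) + M(n_1/2, …, n_r/2) if n_1 ≡ 2 (mod 4) and 2 divides gcd(n_1, …, n_r), and V_1(n_1, …, n_r) = M(n_1, …, n_r) otherwise. -/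
/-- `Mword n = M(n_1, …, n_k) = (1/n) ∑_{d ∣ gcd(n_1,…,n_k)} μ(d) (n/d)! / ((n_1/d)!⋯(n_k/d)!)`
with `n = n_1 + ⋯ + n_k` (equal to `0` when all `n_i` vanish). -/
noncomputable def Mword {k : ℕ} (n : Fin k → ℕ) : ℚ :=
  (1 / ((∑ i, n i : ℕ) : ℚ)) * ∑ d ∈ (Finset.univ.gcd n).divisors,
    ((ArithmeticFunction.moebius d : ℤ) : ℚ) *
      (Nat.factorial ((∑ i, n i) / d) : ℚ) / ∏ i, (Nat.factorial (n i / d) : ℚ)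

/-- `V1word n = V_1(n_1, …, n_{k+1}) = ((-1)^{n_1}/n) ∑_{d ∣ gcd} μ(d) (-1)^{n_1/d}
(n/d)! / ((n_1/d)!⋯(n_{k+1}/d)!)` with `n = n_1 + ⋯ + n_{k+1}`. -/
noncomputable def V1word {k : ℕ} (n : Fin (k + 1) → ℕ) : ℚ :=
  ((-1 : ℚ) ^ (n 0) / ((∑ i, n i : ℕ) : ℚ)) * ∑ d ∈ (Finset.univ.gcd n).divisors,
    ((ArithmeticFunction.moebius d : ℤ) : ℚ) * (-1 : ℚ) ^ (n 0 / d) *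
      (Nat.factorial ((∑ i, n i) / d) : ℚ) / ∏ i, (Nat.factorial (n i / d) : ℚ)

/-! Write `t(d) = μ(d) (n/d)! / ∏ (n_i/d)!` for the terms of `M`. In `V_1` the term `t(d)`
carries the extra sign `(-1)^(n_1 + n_1/d)`, and only squarefree `d` contribute. For odd `d`
the sign is `1`; for `d = 2e` with `e` odd it is `-1` exactly when `n_1 ≡ 2 (mod 4)`. In that
case `gcd/2` divides `n_1/2`, so it is odd, every even divisor of the gcd is `2e` with `e` odd,
and `μ(2e) = -μ(e)` turns the even divisors' part of the sum into `-(n/2) M(n_1/2, …, n_r/2)`. -/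

open Finset ArithmeticFunction

theorem Finset.gcd_div_of_dvd {ι : Type*} {s : Finset ι} {f : ι → ℕ} {a : ℕ}
    (h : ∀ i ∈ s, a ∣ f i) : (s.gcd fun i => f i / a) = s.gcd f / a := by
  rcases Nat.eq_zero_or_pos a with rfl | ha
  · simp [Finset.gcd_eq_zero_iff]
  have hmul : s.gcd f = a * s.gcd fun i => f i / a := by
    rw [← normalize_eq a, ← Finset.gcd_mul_left, normalize_eq]
    exact Finset.gcd_congr rfl fun i hi => (Nat.mul_div_cancel' (h i hi)).symm
  rw [hmul, Nat.mul_div_cancel_left _ ha]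

theorem Nat.sum_divisors_filter_dvd {M : Type*} [AddCommMonoid M] (f : ℕ → M) {p g : ℕ}
    (hpg : p ∣ g) : ∑ d ∈ g.divisors with p ∣ d, f d = ∑ e ∈ (g / p).divisors, f (p * e) := by
  obtain ⟨m, rfl⟩ := hpg
  rcases Nat.eq_zero_or_pos p with rfl | hp
  · simp
  have himage : {d ∈ (p * m).divisors | p ∣ d} = m.divisors.image (p * ·) := by
    ext d
    simp only [Finset.mem_filter, Nat.mem_divisors, Finset.mem_image]
    constructor
    · rintro ⟨⟨hd, hpm⟩, e, rfl⟩
      exact ⟨e, ⟨Nat.dvd_of_mul_dvd_mul_left hp hd, right_ne_zero_of_mul hpm⟩, rfl⟩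
    · rintro ⟨e, ⟨he, hm⟩, rfl⟩
      exact ⟨⟨Nat.mul_dvd_mul_left p he, by positivity⟩, dvd_mul_right p e⟩
  rw [himage, Finset.sum_image fun _ _ _ _ h => Nat.eq_of_mul_eq_mul_left hp h,
    Nat.mul_div_cancel_left m hp]

theorem neg_one_pow_mul_neg_one_pow_div_of_squarefree {R : Type*} [Monoid R] [HasDistribNeg R]
    {a d : ℕ} (hd : Squarefree d) (hda : d ∣ a) :
    (-1 : R) ^ a * (-1) ^ (a / d) = if 2 ∣ d ∧ a % 4 = 2 then -1 else 1 := by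
  obtain ⟨q, rfl⟩ := hda
  rw [Nat.mul_div_cancel_left q (Nat.pos_of_ne_zero hd.ne_zero), ← pow_add]
  by_cases h2d : 2 ∣ d
  · obtain ⟨e, rfl⟩ := h2d
    have he : Odd e := Nat.odd_iff.mpr <| Nat.two_dvd_ne_zero.mp fun h2e => by
      simpa using hd 2 (by simpa [mul_comm] using Nat.mul_dvd_mul_left 2 h2e)
    have hmod : 2 * e * q % 4 = 2 * (e * q % 2) := by
      rw [mul_assoc]; exact Nat.mul_mod_mul_left 2 (e * q) 2
    rcases Nat.even_or_odd q with hq | hq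
    · have : e * q % 2 = 0 := Nat.even_iff.mp (hq.mul_left e)
      rw [if_neg (by omega), ((even_two_mul e).mul_right q |>.add hq).neg_one_pow]
    · have : e * q % 2 = 1 := Nat.odd_iff.mp (he.mul hq)
      rw [if_pos ⟨dvd_mul_right 2 e, by omega⟩,
        ((even_two_mul e).mul_right q |>.add_odd hq).neg_one_pow]
  · rw [if_neg fun h => h2d h.1, show d * q + q = (d + 1) * q by ring]
    exact ((Nat.even_add_one.mpr (by rwa [even_iff_two_dvd])).mul_right q).neg_one_pow

noncomputable def wittTerm {k : ℕ} (n : Fin k → ℕ) (d : ℕ) : ℚ :=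
  ((moebius d : ℤ) : ℚ) * ((∑ i, n i) / d).factorial / ∏ i, ((n i / d).factorial : ℚ)

lemma wittTerm_two_mul {k : ℕ} {n : Fin k → ℕ} (hn : ∀ i, 2 ∣ n i) {e : ℕ} (he : ¬ 2 ∣ e) :
    wittTerm n (2 * e) = -wittTerm (fun i => n i / 2) e := by
  have hμ : moebius (2 * e) = -moebius e := by
    rw [isMultiplicative_moebius.map_mul_of_coprime
      (Nat.prime_two.coprime_iff_not_dvd.mpr he), moebius_apply_prime Nat.prime_two, neg_one_mul]
  simp only [wittTerm, hμ, ← Nat.div_div_eq_div_mul, ← Nat.sum_div fun i _ => hn i]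
  push_cast
  ring

lemma Mword_eq_sum_wittTerm {k : ℕ} (n : Fin k → ℕ) :
    Mword n = 1 / ((∑ i, n i : ℕ) : ℚ) * ∑ d ∈ (univ.gcd n).divisors, wittTerm n d :=
  rfl

lemma V1word_eq_sum_wittTerm {k : ℕ} (n : Fin (k + 1) → ℕ) :
    V1word n = 1 / ((∑ i, n i : ℕ) : ℚ) * ∑ d ∈ (univ.gcd n).divisors,
      (if 2 ∣ d ∧ n 0 % 4 = 2 then -1 else 1) * wittTerm n d := by
  rw [V1word, div_eq_mul_one_div, mul_comm ((-1 : ℚ) ^ n 0), mul_assoc, mul_sum]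
  congr 1
  refine sum_congr rfl fun d hd => ?_
  by_cases hμ : moebius d = 0
  · simp [wittTerm, hμ]
  have hd0 : d ∣ n 0 := (Nat.dvd_of_mem_divisors hd).trans (gcd_dvd (mem_univ 0))
  rw [← neg_one_pow_mul_neg_one_pow_div_of_squarefree (moebius_ne_zero_iff_squarefree.mp hμ) hd0,
    wittTerm]
  ring

theorem V1word_eq_Mword_general (r : ℕ) (n : Fin (r + 1) → ℕ) :
    V1word n =
      if n 0 % 4 = 2 ∧ 2 ∣ Finset.univ.gcd n then
        Mword n + Mword (fun i => n i / 2)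
      else Mword n := by
  have hg : ∀ i, univ.gcd n ∣ n i := fun i => gcd_dvd (mem_univ i)
  rw [V1word_eq_sum_wittTerm]
  split_ifs with hc
  · obtain ⟨h4, h2g⟩ := hc
    have h2 : ∀ i, 2 ∣ n i := fun i => h2g.trans (hg i)
    have hodd : ∀ e ∈ (univ.gcd n / 2).divisors, ¬ 2 ∣ e := fun e he h2e => by
      have := (Nat.mul_dvd_of_dvd_div h2g (h2e.trans (Nat.dvd_of_mem_divisors he))).trans (hg 0)
      omega
    have hsplit : ∀ d, (if 2 ∣ d ∧ n 0 % 4 = 2 then -1 else 1) * wittTerm n d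
        = wittTerm n d - 2 * if 2 ∣ d then wittTerm n d else 0 := fun d => by
      by_cases h2d : 2 ∣ d <;> simp [h2d, h4]; ring
    simp only [hsplit, sum_sub_distrib, ← mul_sum, ← sum_filter, Nat.sum_divisors_filter_dvd _ h2g]
    rw [sum_congr rfl fun e he => wittTerm_two_mul h2 (hodd e he), sum_neg_distrib,
      Mword_eq_sum_wittTerm, Mword_eq_sum_wittTerm, gcd_div_of_dvd fun i _ => h2 i,
      ← Nat.sum_div fun i _ => h2 i, Nat.cast_div_charZero (dvd_sum fun i _ => h2 i)]
    ring
  · rw [Mword_eq_sum_wittTerm]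
    refine congrArg _ (sum_congr rfl fun d hd => ?_)
    rw [if_neg fun h => hc ⟨h.2, h.1.trans (Nat.dvd_of_mem_divisors hd)⟩, one_mul]

/-- Lemma (minnetje): for `r + 1 ≥ 1` non-negative integers `n_0, …, n_r` with
`n_0 + ⋯ + n_r ≥ 1`: `V_1(n_0,…,n_r) = M(n_0,…,n_r) + M(n_0/2,…,n_r/2)` if
`n_0 ≡ 2 (mod 4)` and `2 ∣ gcd(n_0,…,n_r)`, and `V_1(n_0,…,n_r) = M(n_0,…,n_r)`
otherwise. -/
theorem V1word_eq_Mword (r : ℕ) (n : Fin (r + 1) → ℕ) (h : 1 ≤ ∑ i, n i) :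
    V1word n =
      if n 0 % 4 = 2 ∧ 2 ∣ Finset.univ.gcd n then
        Mword n + Mword (fun i => n i / 2)
      else Mword n :=
  V1word_eq_Mword_general r n
end
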